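/- For any parametric trace τ and any parameter instance θ : X ⇀ V, the trace slice of τ by θ equals the trace slice of τ by max (θ]_{Θ_τ}, i.e., τ↾θ = τ↾(max (θ]_{Θ_τ}); here max (θ]_{Θ_τ} exists because Θ_τ is lub closed. -/

import Mathlib

/- Partial functions X ⇀ V are modeled as functions `X → Option V`. -/

variable {X V E : Type*}

/-- `θ` is less informative than `θ'` (θ ⊑ θ'): wherever `θ` is defined, `θ'` is
defined with the same value. -/
def PFle (θ θ' : X → Option V) : Prop :=
  ∀ x v, θ x = some v → θ' x = some v

/-- The everywhere-undefined partial function ⊥. -/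
def pbot : X → Option V := fun _ => none

/-- `θ'` is an upper bound of the set `Θ` of partial functions. -/
def IsUB (Θ : Set (X → Option V)) (θ' : X → Option V) : Prop :=
  ∀ θ ∈ Θ, PFle θ θ'

/-- `θ'` is the least upper bound (⊔Θ) of the set `Θ` of partial functions. -/
def IsLubPF (Θ : Set (X → Option V)) (θ' : X → Option V) : Prop :=
  IsUB Θ θ' ∧ ∀ θ'', IsUB Θ θ'' → PFle θ' θ''

/-- Θ is lub closed: every subset of Θ admitting an upper bound has its lub in Θ. -/
def LubClosed (Θ : Set (X → Option V)) : Prop :=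
  ∀ Θ' ⊆ Θ, ∀ u, IsLubPF Θ' u → u ∈ Θ

/-- The lub closure of Θ: the intersection of all lub closed sets including Θ. -/
def lubClosure (Θ : Set (X → Option V)) : Set (X → Option V) :=
  ⋂₀ {Θ' | Θ ⊆ Θ' ∧ LubClosed Θ'}

/-- (θ]_Θ : the elements of Θ that are less informative than θ. -/
def below (θ : X → Option V) (Θ : Set (X → Option V)) : Set (X → Option V) :=
  {θ'' ∈ Θ | PFle θ'' θ}

/-- A parametric event is a pair e⟨θ⟩; a parametric trace is a finite list of
parametric events. Θ_τ is the lub closure of the parameter instances occurring in τ. -/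
def ThetaOf (τ : List (E × (X → Option V))) : Set (X → Option V) :=
  lubClosure {θ | ∃ e : E, (e, θ) ∈ τ}

/-- The θ-trace traceSlice τ↾θ : keep (in order) the base events of τ whose parameter
instance is ⊑ θ, dropping the parameter instances. -/
noncomputable def traceSlice (τ : List (E × (X → Option V))) (θ : X → Option V) :
    List E :=
  (τ.filter fun p => @decide (PFle p.2 θ) (Classical.propDecidable _)).map Prod.fst

/-! Θ_τ is lub closed, so `m := max (θ]_{Θ_τ}` exists: it is the lub of (θ]_{Θ_τ}, namely `θ`
restricted to the union of the domains of the elements of (θ]_{Θ_τ}. Every parameter instance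
`θ'` occurring in `τ` lies in Θ_τ, so `θ' ⊑ θ` iff `θ' ∈ (θ]_{Θ_τ}` iff `θ' ⊑ m`; hence both
slices keep the same events. -/

theorem PFle.trans {θ₁ θ₂ θ₃ : X → Option V} (h₁₂ : PFle θ₁ θ₂) (h₂₃ : PFle θ₂ θ₃) :
    PFle θ₁ θ₃ :=
  fun x v hx => h₂₃ x v (h₁₂ x v hx)

theorem subset_lubClosure (Θ : Set (X → Option V)) : Θ ⊆ lubClosure Θ :=
  fun _ hθ _ hT => hT.1 hθ

theorem lubClosed_lubClosure (Θ : Set (X → Option V)) : LubClosed (lubClosure Θ) :=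
  fun Θ' hsub u hu _ hT => hT.2 Θ' (fun _ hθ => hsub hθ _ hT) u hu

open Classical in
noncomputable def domRestrict (θ : X → Option V) (Θ : Set (X → Option V)) : X → Option V :=
  fun x => if ∃ s ∈ Θ, (s x).isSome then θ x else none

theorem domRestrict_pfle (θ : X → Option V) (Θ : Set (X → Option V)) :
    PFle (domRestrict θ Θ) θ := by
  intro x v hx
  unfold domRestrict at hx
  split_ifs at hx
  exact hx

theorem isLubPF_domRestrict {θ : X → Option V} {Θ : Set (X → Option V)} (hθ : IsUB Θ θ) :
    IsLubPF Θ (domRestrict θ Θ) := by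
  constructor
  · intro s hs x v hx
    have hdef : ∃ s ∈ Θ, (s x).isSome := ⟨s, hs, by simp [hx]⟩
    simpa only [domRestrict, if_pos hdef] using hθ s hs x v hx
  · intro t ht x v hx
    unfold domRestrict at hx
    split_ifs at hx with hdef
    obtain ⟨s, hs, hsome⟩ := hdef
    obtain ⟨w, hw⟩ := Option.isSome_iff_exists.mp hsome
    obtain rfl : w = v := Option.some_injective _ ((hθ s hs x w hw).symm.trans hx)
    exact ht s hs x w hw

theorem exists_max_below_of_lubClosed {Θ : Set (X → Option V)} (hΘ : LubClosed Θ)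
    (θ : X → Option V) : ∃ m ∈ below θ Θ, ∀ q ∈ below θ Θ, PFle q m := by
  have hub : IsUB (below θ Θ) θ := fun _ hq => hq.2
  have hlub := isLubPF_domRestrict hub
  exact ⟨_, ⟨hΘ _ (fun _ hq => hq.1) _ hlub, domRestrict_pfle θ _⟩, hlub.1⟩

theorem traceSlice_congr {τ : List (E × (X → Option V))} {θ θ' : X → Option V}
    (h : ∀ p ∈ τ, PFle p.2 θ ↔ PFle p.2 θ') : traceSlice τ θ = traceSlice τ θ' := by
  unfold traceSlice
  congr 1
  refine List.filter_congr fun p hp => ?_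
  simpa only [decide_eq_decide] using h p hp

/-- Slicing with less: τ↾θ = τ↾(max (θ]_{Θ_τ}), where the maximum of (θ]_{Θ_τ}
exists since Θ_τ is lub closed. -/
theorem stmt16 (τ : List (E × (X → Option V))) (θ : X → Option V) :
    ∃ m, (m ∈ below θ (ThetaOf τ) ∧ ∀ q ∈ below θ (ThetaOf τ), PFle q m) ∧
      traceSlice τ θ = traceSlice τ m := by
  obtain ⟨m, hm, hmax⟩ := exists_max_below_of_lubClosed (lubClosed_lubClosure _) θ
  refine ⟨m, ⟨hm, hmax⟩, traceSlice_congr fun p hp => ?_⟩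
  have hpΘ : p.2 ∈ ThetaOf τ := subset_lubClosure _ ⟨p.1, hp⟩
  exact ⟨fun hpθ => hmax p.2 ⟨hpΘ, hpθ⟩, fun hpm => hpm.trans hm.2⟩
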